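/- arXiv:2001.08167 — 3 statements merged into one kernel-verified Lean document; each statement's English description precedes it below -/
import Mathlib

section
/- The generalized Vandermonde-type matrix with rows (1, ξ₁^j, ξ₂^j, ξ₃^j) for j = 1,2,3,4 is invertible whenever ξ₁, ξ₂, ξ₃ are pairwise distinct real numbers in the open interval (0,1). -/
open Matrix

/- Writing `v = (1, ξ₁, ξ₂, ξ₃)`, the matrix is `(vandermonde v)ᵀ * diagonal v`, so its determinant is
`ξ₁ ξ₂ ξ₃ · ∏_{i<j} (v j - v i)`; it vanishes only if some `ξᵢ` is `0` or the entries of `v` are not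
distinct, which `0 < ξᵢ < 1` and injectivity exclude. -/

namespace Matrix

variable {R : Type*} [CommRing R] {n : ℕ}

theorem of_pow_succ_eq_vandermonde_transpose_mul_diagonal (v : Fin n → R) :
    (of fun j i : Fin n => v i ^ ((j : ℕ) + 1)) = (vandermonde v)ᵀ * diagonal v := by
  ext j i
  simp [mul_diagonal, vandermonde_apply, pow_succ]

theorem det_of_pow_succ (v : Fin n → R) :
    (of fun j i : Fin n => v i ^ ((j : ℕ) + 1)).det = (vandermonde v).det * ∏ i, v i := by
  rw [of_pow_succ_eq_vandermonde_transpose_mul_diagonal, det_mul, det_transpose, det_diagonal]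

theorem det_of_pow_succ_ne_zero [IsDomain R] {v : Fin n → R} (hv : Function.Injective v)
    (hv0 : ∀ i, v i ≠ 0) : (of fun j i : Fin n => v i ^ ((j : ℕ) + 1)).det ≠ 0 := by
  rw [det_of_pow_succ]
  exact mul_ne_zero (det_vandermonde_ne_zero_iff.2 hv) (Finset.prod_ne_zero_iff.2 fun i _ => hv0 i)

end Matrix

theorem vandermonde_type_four_invertible
    (ξ : Fin 3 → ℝ)
    (hpos : ∀ i, 0 < ξ i) (hlt : ∀ i, ξ i < 1)
    (hinj : Function.Injective ξ)
    (M : Matrix (Fin 4) (Fin 4) ℝ)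
    (hM : ∀ j : Fin 4, M j 0 = 1 ∧ ∀ i : Fin 3, M j i.succ = ξ i ^ ((j : ℕ) + 1)) :
    M.det ≠ 0 := by
  set v : Fin 4 → ℝ := Fin.cons 1 ξ
  have hMv : M = of fun j i : Fin 4 => v i ^ ((j : ℕ) + 1) := by
    ext j i
    cases i using Fin.cases <;> simp [v, hM]
  have hv : Function.Injective v :=
    Fin.cons_injective_of_injective (fun ⟨i, hi⟩ => (hlt i).ne hi) hinj
  have hv0 : ∀ i, v i ≠ 0 := Fin.cases one_ne_zero fun i => (hpos i).ne'
  rw [hMv]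
  exact det_of_pow_succ_ne_zero hv hv0
end

section
/- Qutrit dynamic tomography: if ρ is a 3×3 density matrix evolving as ρ(t) = D(t) ∘ ρ with the phase-damping dynamic matrix D(t) (pairwise distinct positive decoherence rates γ₁,γ₂,γ₃), then ρ is uniquely determined by the 8 numbers Tr(Q₁ ρ(kt)) and Tr(Q₂ ρ(kt)) for k = 1,2,3,4, for any t > 0; i.e., if two density matrices give the same 8 measurement values, they are equal. -/
/-!
Each measurement `Tr (Q (D(s) ∘ ρ))` is an exponential sum `∑ₘ cₘ e^{-γₘ s}` over the rates
`0, γ₁, γ₂, γ₃`, with coefficients linear in `ρ`. Sampling it at `s = t, 2t, 3t, 4t` gives a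
Vandermonde system in the distinct nodes `e^{-γₘ t}`, so for `ρ - σ` all four coefficients of
both `Q₁` and `Q₂` vanish. These eight linear conditions, together with `Tr (ρ - σ) = 0`,
force `ρ = σ`.
-/

open Matrix Complex

lemma Matrix.hadamard_sub {m n α : Type*} [NonUnitalNonAssocRing α] (A B C : Matrix m n α) :
    A ⊙ (B - C) = A ⊙ B - A ⊙ C :=
  ext fun _ _ ↦ mul_sub _ _ _

lemma eq_zero_of_forall_sum_mul_exp_eq_zero {n : ℕ} {r : Fin n → ℝ} (hr : Function.Injective r)
    {t : ℝ} (ht : t ≠ 0) {c : Fin n → ℂ}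
    (h : ∀ k : Fin n, ∑ m, c m * Real.exp (-r m * ((k + 1 : ℕ) * t)) = 0) : c = 0 := by
  set w : Fin n → ℂ := fun m ↦ (Real.exp (-r m * t) : ℂ)
  have hw : Function.Injective w := fun i j hij ↦
    hr <| neg_injective <| mul_right_cancel₀ ht <| Real.exp_injective <| ofReal_injective hij
  have hexp (m : Fin n) (k : ℕ) : (Real.exp (-r m * ((k + 1 : ℕ) * t)) : ℂ) = w m * w m ^ k := by
    rw [← pow_succ', ← ofReal_pow, ← Real.exp_nat_mul]
    congr 2
    ring
  have hcw : (fun m ↦ c m * w m) = 0 :=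
    eq_zero_of_forall_pow_sum_mul_pow_eq_zero hw fun k ↦ by
      rw [← h k]
      exact Finset.sum_congr rfl fun m _ ↦ by rw [hexp, mul_assoc]
  funext m
  exact (mul_eq_zero.mp (congr_fun hcw m)).resolve_right (by simp [w])

noncomputable def phaseDamping (γ₁ γ₂ γ₃ s : ℝ) : Matrix (Fin 3) (Fin 3) ℂ :=
  !![1, (Real.exp (-γ₁ * s) : ℂ), (Real.exp (-γ₂ * s) : ℂ);
    (Real.exp (-γ₁ * s) : ℂ), 1, (Real.exp (-γ₃ * s) : ℂ);
    (Real.exp (-γ₂ * s) : ℂ), (Real.exp (-γ₃ * s) : ℂ), 1]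

def phaseDampingRates (γ₁ γ₂ γ₃ : ℝ) : Fin 4 → ℝ := ![0, γ₁, γ₂, γ₃]

def rateCoeff (Q ρ : Matrix (Fin 3) (Fin 3) ℂ) : Fin 4 → ℂ :=
  ![Q 0 0 * ρ 0 0 + Q 1 1 * ρ 1 1 + Q 2 2 * ρ 2 2, Q 1 0 * ρ 0 1 + Q 0 1 * ρ 1 0,
    Q 2 0 * ρ 0 2 + Q 0 2 * ρ 2 0, Q 2 1 * ρ 1 2 + Q 1 2 * ρ 2 1]

lemma phaseDampingRates_injective {γ₁ γ₂ γ₃ : ℝ} (h1 : γ₁ ≠ 0) (h2 : γ₂ ≠ 0) (h3 : γ₃ ≠ 0)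
    (h12 : γ₁ ≠ γ₂) (h13 : γ₁ ≠ γ₃) (h23 : γ₂ ≠ γ₃) :
    Function.Injective (phaseDampingRates γ₁ γ₂ γ₃) := by
  intro i j hij
  fin_cases i <;> fin_cases j <;> simp_all [phaseDampingRates, eq_comm]

lemma trace_mul_phaseDamping_hadamard (γ₁ γ₂ γ₃ s : ℝ) (Q ρ : Matrix (Fin 3) (Fin 3) ℂ) :
    (Q * phaseDamping γ₁ γ₂ γ₃ s ⊙ ρ).trace =
      ∑ m, rateCoeff Q ρ m * Real.exp (-phaseDampingRates γ₁ γ₂ γ₃ m * s) := by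
  simp only [phaseDamping, phaseDampingRates, rateCoeff, trace_fin_three, mul_apply,
    hadamard_apply, of_apply, cons_val', cons_val_zero, cons_val_one, cons_val, cons_val_fin_one,
    Fin.sum_univ_three, Fin.sum_univ_four, neg_zero, zero_mul, Real.exp_zero, ofReal_one]
  ring

lemma eq_zero_of_rateCoeff_eq_zero {ρ : Matrix (Fin 3) (Fin 3) ℂ}
    (h₁ : rateCoeff !![1, 1, -I; 1, -1, -I; I, I, 0] ρ = 0)
    (h₂ : rateCoeff !![(Real.sqrt 3 : ℂ)⁻¹, -I, 1; I, (Real.sqrt 3 : ℂ)⁻¹, 1;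
                   1, 1, -2 * (Real.sqrt 3 : ℂ)⁻¹] ρ = 0)
    (htr : ρ.trace = 0) : ρ = 0 := by
  have hs : (Real.sqrt 3 : ℂ)⁻¹ ≠ 0 := by simp
  simp only [rateCoeff, of_apply, cons_val', cons_val_zero, cons_val_one, cons_val, cons_val_succ,
    cons_val_fin_one, funext_iff, Pi.zero_apply, Fin.forall_fin_succ, forall_const] at h₁ h₂
  rw [trace_fin_three] at htr
  obtain ⟨a0, a1, a2, a3⟩ := h₁
  obtain ⟨b0, b1, b2, b3⟩ := h₂
  have a2' : ρ 0 2 - ρ 2 0 = 0 := mul_left_cancel₀ I_ne_zero (by linear_combination a2)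
  have a3' : ρ 1 2 - ρ 2 1 = 0 := mul_left_cancel₀ I_ne_zero (by linear_combination a3)
  have b1' : ρ 0 1 - ρ 1 0 = 0 := mul_left_cancel₀ I_ne_zero (by linear_combination b1)
  have b0' : ρ 0 0 + ρ 1 1 - 2 * ρ 2 2 = 0 := mul_left_cancel₀ hs (by linear_combination b0)
  ext i j
  fin_cases i <;> fin_cases j <;>
    simp only [Fin.zero_eta, Fin.mk_one, Fin.reduceFinMk, Matrix.zero_apply]
  · linear_combination a0 / 2 + b0' / 6 + htr / 3
  · linear_combination (a1 + b1') / 2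
  · linear_combination (b2 + a2') / 2
  · linear_combination (a1 - b1') / 2
  · linear_combination -a0 / 2 + b0' / 6 + htr / 3
  · linear_combination (b3 + a3') / 2
  · linear_combination (b2 - a2') / 2
  · linear_combination (b3 - a3') / 2
  · linear_combination htr / 3 - b0' / 3

theorem qutrit_dynamic_tomography_general
    (γ₁ γ₂ γ₃ t : ℝ) (h1 : 0 < γ₁) (h2 : 0 < γ₂) (h3 : 0 < γ₃)
    (h12 : γ₁ ≠ γ₂) (h13 : γ₁ ≠ γ₃) (h23 : γ₂ ≠ γ₃) (ht : 0 < t)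
    (D : ℝ → Matrix (Fin 3) (Fin 3) ℂ)
    (hD : ∀ s, D s = !![1, (Real.exp (-γ₁ * s) : ℂ), (Real.exp (-γ₂ * s) : ℂ);
        (Real.exp (-γ₁ * s) : ℂ), 1, (Real.exp (-γ₃ * s) : ℂ);
        (Real.exp (-γ₂ * s) : ℂ), (Real.exp (-γ₃ * s) : ℂ), 1])
    (Q₁ Q₂ : Matrix (Fin 3) (Fin 3) ℂ)
    (hQ₁ : Q₁ = !![1, 1, -I; 1, -1, -I; I, I, 0])
    (hQ₂ : Q₂ = !![(Real.sqrt 3 : ℂ)⁻¹, -I, 1; I, (Real.sqrt 3 : ℂ)⁻¹, 1;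
                   1, 1, -2 * (Real.sqrt 3 : ℂ)⁻¹])
    (ρ σ : Matrix (Fin 3) (Fin 3) ℂ)
    (htρ : ρ.trace = 1) (htσ : σ.trace = 1)
    (hmeas : ∀ k : Fin 4,
      (Q₁ * ((D ((k + 1 : ℕ) * t)).hadamard ρ)).trace =
        (Q₁ * ((D ((k + 1 : ℕ) * t)).hadamard σ)).trace ∧
      (Q₂ * ((D ((k + 1 : ℕ) * t)).hadamard ρ)).trace =
        (Q₂ * ((D ((k + 1 : ℕ) * t)).hadamard σ)).trace) :
    ρ = σ := by
  obtain rfl : D = phaseDamping γ₁ γ₂ γ₃ := funext hD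
  have hrates := phaseDampingRates_injective h1.ne' h2.ne' h3.ne' h12 h13 h23
  have hcoeff (Q : Matrix (Fin 3) (Fin 3) ℂ)
      (hQ : ∀ k : Fin 4, (Q * phaseDamping γ₁ γ₂ γ₃ ((k + 1 : ℕ) * t) ⊙ ρ).trace =
        (Q * phaseDamping γ₁ γ₂ γ₃ ((k + 1 : ℕ) * t) ⊙ σ).trace) :
      rateCoeff Q (ρ - σ) = 0 :=
    eq_zero_of_forall_sum_mul_exp_eq_zero hrates ht.ne' fun k ↦ by
      rw [← trace_mul_phaseDamping_hadamard, hadamard_sub, mul_sub, trace_sub, hQ k, sub_self]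
  subst hQ₁ hQ₂
  rw [← sub_eq_zero]
  exact eq_zero_of_rateCoeff_eq_zero (hcoeff _ fun k ↦ (hmeas k).1) (hcoeff _ fun k ↦ (hmeas k).2)
    (by rw [trace_sub, htρ, htσ, sub_self])

theorem qutrit_dynamic_tomography
    (γ₁ γ₂ γ₃ t : ℝ) (h1 : 0 < γ₁) (h2 : 0 < γ₂) (h3 : 0 < γ₃)
    (h12 : γ₁ ≠ γ₂) (h13 : γ₁ ≠ γ₃) (h23 : γ₂ ≠ γ₃) (ht : 0 < t)
    (D : ℝ → Matrix (Fin 3) (Fin 3) ℂ)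
    (hD : ∀ s, D s = !![1, (Real.exp (-γ₁ * s) : ℂ), (Real.exp (-γ₂ * s) : ℂ);
        (Real.exp (-γ₁ * s) : ℂ), 1, (Real.exp (-γ₃ * s) : ℂ);
        (Real.exp (-γ₂ * s) : ℂ), (Real.exp (-γ₃ * s) : ℂ), 1])
    (Q₁ Q₂ : Matrix (Fin 3) (Fin 3) ℂ)
    (hQ₁ : Q₁ = !![1, 1, -I; 1, -1, -I; I, I, 0])
    (hQ₂ : Q₂ = !![(Real.sqrt 3 : ℂ)⁻¹, -I, 1; I, (Real.sqrt 3 : ℂ)⁻¹, 1;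
                   1, 1, -2 * (Real.sqrt 3 : ℂ)⁻¹])
    (ρ σ : Matrix (Fin 3) (Fin 3) ℂ)
    (hρ : ρ.IsHermitian) (hσ : σ.IsHermitian)
    (htρ : ρ.trace = 1) (htσ : σ.trace = 1)
    (hmeas : ∀ k : Fin 4,
      (Q₁ * ((D ((k + 1 : ℕ) * t)).hadamard ρ)).trace =
        (Q₁ * ((D ((k + 1 : ℕ) * t)).hadamard σ)).trace ∧
      (Q₂ * ((D ((k + 1 : ℕ) * t)).hadamard ρ)).trace =
        (Q₂ * ((D ((k + 1 : ℕ) * t)).hadamard σ)).trace) :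
    ρ = σ :=
  qutrit_dynamic_tomography_general γ₁ γ₂ γ₃ t h1 h2 h3 h12 h13 h23 ht D hD Q₁ Q₂ hQ₁ hQ₂ ρ σ htρ
    htσ hmeas
end

section
/- Entangled-qubit tomography: for the Bell-diagonal state family and the observable Q = E₁₁ − E₂₂ + E₂₃ + E₃₂ + E₁₄ + E₄₁, the measurement results m(s) = Tr(Q (D(s) ∘ ρ)) satisfy m(s) = Tr(Λ¹ρ) + e^{-γ₃s} Tr(Λ_s^{14}ρ) + e^{-γ₄s} Tr(Λ_s^{23}ρ), and the map (p₁,p₂,p₃) ↦ (m(t), m(2t), m(3t)) is injective whenever γ₃ ≠ γ₄ are positive and t > 0. -/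
/-!
Since `tr (A (D ∘ ρ)) = tr ((A ∘ Dᵀ) ρ)` and `Q` is supported on the diagonal and the entries
`(1,4)`, `(2,3)` (and their mirrors), `Q ∘ D(s)ᵀ = Λ¹ + e^{-γ₃s} Λ_s^{14} + e^{-γ₄s} Λ_s^{23}`,
which gives the formula for every `ρ`. For a Bell-diagonal state the three traces are
`p₁ + p₂ - 1/2`, `p₁ - p₂` and `p₁ + p₂ + 2p₃ - 1`, which determine `(p₁, p₂, p₃)`. Sampling at
`s = t, 2t, 3t` gives a Vandermonde-type system in the nodes `1`, `x = e^{-γ₃t}`, `y = e^{-γ₄t}`,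
which is invertible because these nodes are distinct and nonzero.
-/

open Matrix

theorem Matrix.trace_mul_hadamard {n α : Type*} [Fintype n] [CommSemiring α]
    (A D R : Matrix n n α) : trace (A * (D ⊙ R)) = trace ((A ⊙ Dᵀ) * R) := by
  simp only [trace, diag, mul_apply, hadamard_apply, transpose_apply, mul_assoc]

theorem eq_of_add_mul_pow_add_mul_pow_eq {K : Type*} [Field K] {a b c a' b' c' x y : K}
    (hx₀ : x ≠ 0) (hy₀ : y ≠ 0) (hx₁ : x ≠ 1) (hy₁ : y ≠ 1) (hxy : x ≠ y)
    (h : ∀ k : Fin 3, a + b * x ^ (k + 1 : ℕ) + c * y ^ (k + 1 : ℕ) =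
      a' + b' * x ^ (k + 1 : ℕ) + c' * y ^ (k + 1 : ℕ)) :
    a = a' ∧ b = b' ∧ c = c' := by
  have e₁ := h 0
  have e₂ := h 1
  have e₃ := h 2
  norm_num at e₁ e₂ e₃
  have hc : (c - c') * (y * (y - 1) * (y - x)) = 0 := by
    linear_combination e₃ - (1 + x) * e₂ + x * e₁
  have hc' : c = c' := by
    simpa [hy₀, sub_eq_zero, hy₁, hxy.symm] using hc
  have hb : (b - b') * (x * (x - 1)) = 0 := by
    linear_combination e₂ - e₁ - y * (y - 1) * hc'
  have hb' : b = b' := by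
    simpa [hx₀, sub_eq_zero, hx₁] using hb
  exact ⟨by linear_combination e₁ - x * hb' - y * hc', hb', hc'⟩

theorem observable_hadamard_transpose (d₁ d₂ d₃ d₄ d₅ d₆ : ℂ) :
    (!![1,0,0,1; 0,-1,1,0; 0,1,0,0; 1,0,0,0] : Matrix (Fin 4) (Fin 4) ℂ) ⊙
        (!![1, d₁, d₂, d₃; d₁, 1, d₄, d₅; d₂, d₄, 1, d₆; d₃, d₅, d₆, 1])ᵀ =
      !![1,0,0,0; 0,-1,0,0; 0,0,0,0; 0,0,0,0] + d₃ • !![0,0,0,1; 0,0,0,0; 0,0,0,0; 1,0,0,0] +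
        d₄ • !![0,0,0,0; 0,0,1,0; 0,1,0,0; 0,0,0,0] := by
  ext i j
  fin_cases i <;> fin_cases j <;> simp

/-- The Bell-diagonal state with weights `p₁, p₂, p₃, 1 - p₁ - p₂ - p₃` on `Φ⁺, Φ⁻, Ψ⁺, Ψ⁻`,
written in the computational basis. -/
noncomputable def bellDiagonal (p₁ p₂ p₃ : ℝ) : Matrix (Fin 4) (Fin 4) ℂ :=
  let p₄ : ℂ := 1 - (p₁ + p₂ + p₃)
  (2⁻¹ : ℂ) • (!![p₁ + p₂, 0, 0, p₁ - p₂;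
                 0, p₃ + p₄, p₃ - p₄, 0;
                 0, p₃ - p₄, p₃ + p₄, 0;
                 p₁ - p₂, 0, 0, p₁ + p₂] : Matrix (Fin 4) (Fin 4) ℂ)

theorem bell_mixture_eq_bellDiagonal (p₁ p₂ p₃ : ℝ) :
    (p₁ : ℂ) • vecMulVec ![(Real.sqrt 2 : ℂ)⁻¹, 0, 0, (Real.sqrt 2 : ℂ)⁻¹]
        (star ![(Real.sqrt 2 : ℂ)⁻¹, 0, 0, (Real.sqrt 2 : ℂ)⁻¹]) +
      (p₂ : ℂ) • vecMulVec ![(Real.sqrt 2 : ℂ)⁻¹, 0, 0, -(Real.sqrt 2 : ℂ)⁻¹]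
        (star ![(Real.sqrt 2 : ℂ)⁻¹, 0, 0, -(Real.sqrt 2 : ℂ)⁻¹]) +
      (p₃ : ℂ) • vecMulVec ![0, (Real.sqrt 2 : ℂ)⁻¹, (Real.sqrt 2 : ℂ)⁻¹, 0]
        (star ![0, (Real.sqrt 2 : ℂ)⁻¹, (Real.sqrt 2 : ℂ)⁻¹, 0]) +
      ((1 - (p₁ + p₂ + p₃) : ℝ) : ℂ) • vecMulVec ![0, (Real.sqrt 2 : ℂ)⁻¹, -(Real.sqrt 2 : ℂ)⁻¹, 0]
        (star ![0, (Real.sqrt 2 : ℂ)⁻¹, -(Real.sqrt 2 : ℂ)⁻¹, 0]) =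
      bellDiagonal p₁ p₂ p₃ := by
  have h : ((Real.sqrt 2 : ℂ))⁻¹ * ((Real.sqrt 2 : ℂ))⁻¹ = 2⁻¹ := by
    rw [← mul_inv, ← Complex.ofReal_mul, Real.mul_self_sqrt zero_le_two]
    norm_num
  ext i j
  fin_cases i <;> fin_cases j <;> simp [bellDiagonal, vecMulVec_apply, -cons_vecMulVec, h] <;> ring

theorem trace_lambda1_mul_bellDiagonal (p₁ p₂ p₃ : ℝ) :
    (!![1,0,0,0; 0,-1,0,0; 0,0,0,0; 0,0,0,0] * bellDiagonal p₁ p₂ p₃).trace =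
      ((p₁ + p₂ - 1 / 2 : ℝ) : ℂ) := by
  simp [bellDiagonal, trace, Fin.sum_univ_four]
  ring

theorem trace_lambda14_mul_bellDiagonal (p₁ p₂ p₃ : ℝ) :
    (!![0,0,0,1; 0,0,0,0; 0,0,0,0; 1,0,0,0] * bellDiagonal p₁ p₂ p₃).trace =
      ((p₁ - p₂ : ℝ) : ℂ) := by
  simp [bellDiagonal, trace, Fin.sum_univ_four]
  ring

theorem trace_lambda23_mul_bellDiagonal (p₁ p₂ p₃ : ℝ) :
    (!![0,0,0,0; 0,0,1,0; 0,1,0,0; 0,0,0,0] * bellDiagonal p₁ p₂ p₃).trace =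
      ((p₁ + p₂ + 2 * p₃ - 1 : ℝ) : ℂ) := by
  simp [bellDiagonal, trace, Fin.sum_univ_four]
  ring

theorem entangled_qubit_tomography
    (γ₁ γ₂ γ₃ γ₄ γ₅ γ₆ t : ℝ) (h3 : 0 < γ₃) (h4 : 0 < γ₄) (h34 : γ₃ ≠ γ₄) (ht : 0 < t)
    (D : ℝ → Matrix (Fin 4) (Fin 4) ℂ)
    (hD : ∀ s, D s =
      !![1, (Real.exp (-γ₁ * s) : ℂ), (Real.exp (-γ₂ * s) : ℂ), (Real.exp (-γ₃ * s) : ℂ);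
         (Real.exp (-γ₁ * s) : ℂ), 1, (Real.exp (-γ₄ * s) : ℂ), (Real.exp (-γ₅ * s) : ℂ);
         (Real.exp (-γ₂ * s) : ℂ), (Real.exp (-γ₄ * s) : ℂ), 1, (Real.exp (-γ₆ * s) : ℂ);
         (Real.exp (-γ₃ * s) : ℂ), (Real.exp (-γ₅ * s) : ℂ), (Real.exp (-γ₆ * s) : ℂ), 1])
    (Q Λ1 Λs14 Λs23 : Matrix (Fin 4) (Fin 4) ℂ)
    (hQ : Q = !![1,0,0,1; 0,-1,1,0; 0,1,0,0; 1,0,0,0])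
    (hΛ1 : Λ1 = !![1,0,0,0; 0,-1,0,0; 0,0,0,0; 0,0,0,0])
    (hΛs14 : Λs14 = !![0,0,0,1; 0,0,0,0; 0,0,0,0; 1,0,0,0])
    (hΛs23 : Λs23 = !![0,0,0,0; 0,0,1,0; 0,1,0,0; 0,0,0,0])
    (ρ : ℝ → ℝ → ℝ → Matrix (Fin 4) (Fin 4) ℂ)
    (hρ : ∀ p₁ p₂ p₃ : ℝ,
      ρ p₁ p₂ p₃ =
        (p₁ : ℂ) • vecMulVec ![(Real.sqrt 2 : ℂ)⁻¹, 0, 0, (Real.sqrt 2 : ℂ)⁻¹]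
            (star ![(Real.sqrt 2 : ℂ)⁻¹, 0, 0, (Real.sqrt 2 : ℂ)⁻¹]) +
        (p₂ : ℂ) • vecMulVec ![(Real.sqrt 2 : ℂ)⁻¹, 0, 0, -(Real.sqrt 2 : ℂ)⁻¹]
            (star ![(Real.sqrt 2 : ℂ)⁻¹, 0, 0, -(Real.sqrt 2 : ℂ)⁻¹]) +
        (p₃ : ℂ) • vecMulVec ![0, (Real.sqrt 2 : ℂ)⁻¹, (Real.sqrt 2 : ℂ)⁻¹, 0]
            (star ![0, (Real.sqrt 2 : ℂ)⁻¹, (Real.sqrt 2 : ℂ)⁻¹, 0]) +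
        ((1 - (p₁ + p₂ + p₃) : ℝ) : ℂ) •
          vecMulVec ![0, (Real.sqrt 2 : ℂ)⁻¹, -(Real.sqrt 2 : ℂ)⁻¹, 0]
            (star ![0, (Real.sqrt 2 : ℂ)⁻¹, -(Real.sqrt 2 : ℂ)⁻¹, 0]))
    (m : ℝ → ℝ → ℝ → ℝ → ℂ)
    (hm : ∀ p₁ p₂ p₃ s, m p₁ p₂ p₃ s = (Q * ((D s).hadamard (ρ p₁ p₂ p₃))).trace) :
    (∀ p₁ p₂ p₃ s, m p₁ p₂ p₃ s =
        (Λ1 * ρ p₁ p₂ p₃).trace +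
        (Real.exp (-γ₃ * s) : ℂ) * (Λs14 * ρ p₁ p₂ p₃).trace +
        (Real.exp (-γ₄ * s) : ℂ) * (Λs23 * ρ p₁ p₂ p₃).trace) ∧
    (∀ p₁ p₂ p₃ q₁ q₂ q₃ : ℝ,
      (∀ k : Fin 3, m p₁ p₂ p₃ ((k + 1 : ℕ) * t) = m q₁ q₂ q₃ ((k + 1 : ℕ) * t)) →
      p₁ = q₁ ∧ p₂ = q₂ ∧ p₃ = q₃) := by
  subst hQ hΛ1 hΛs14 hΛs23
  have hformula : ∀ p₁ p₂ p₃ s, m p₁ p₂ p₃ s =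
      (!![1,0,0,0; 0,-1,0,0; 0,0,0,0; 0,0,0,0] * ρ p₁ p₂ p₃).trace +
      (Real.exp (-γ₃ * s) : ℂ) * (!![0,0,0,1; 0,0,0,0; 0,0,0,0; 1,0,0,0] * ρ p₁ p₂ p₃).trace +
      (Real.exp (-γ₄ * s) : ℂ) * (!![0,0,0,0; 0,0,1,0; 0,1,0,0; 0,0,0,0] * ρ p₁ p₂ p₃).trace := by
    intro p₁ p₂ p₃ s
    rw [hm, trace_mul_hadamard, hD, observable_hadamard_transpose]
    simp only [add_mul, smul_mul, trace_add, trace_smul, smul_eq_mul]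
  refine ⟨hformula, fun p₁ p₂ p₃ q₁ q₂ q₃ hk => ?_⟩
  set x := Real.exp (-γ₃ * t)
  set y := Real.exp (-γ₄ * t)
  have hsignal : ∀ p₁ p₂ p₃ (n : ℕ), m p₁ p₂ p₃ (n * t) =
      ((p₁ + p₂ - 1 / 2 + (p₁ - p₂) * x ^ n + (p₁ + p₂ + 2 * p₃ - 1) * y ^ n : ℝ) : ℂ) := by
    intro p₁ p₂ p₃ n
    have hpow (γ : ℝ) : Real.exp (-γ * (n * t)) = Real.exp (-γ * t) ^ n := by
      rw [mul_left_comm, Real.exp_nat_mul]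
    rw [hformula, hρ, bell_mixture_eq_bellDiagonal, trace_lambda1_mul_bellDiagonal,
      trace_lambda14_mul_bellDiagonal, trace_lambda23_mul_bellDiagonal, hpow, hpow]
    push_cast [-Complex.ofReal_exp]
    ring
  have hx₁ : x ≠ 1 := by simpa [x, Real.exp_eq_one_iff] using ⟨h3.ne', ht.ne'⟩
  have hy₁ : y ≠ 1 := by simpa [y, Real.exp_eq_one_iff] using ⟨h4.ne', ht.ne'⟩
  have hxy : x ≠ y := Real.exp_injective.ne ((mul_left_injective₀ ht.ne').ne (neg_injective.ne h34))
  obtain ⟨ha, hb, hc⟩ := eq_of_add_mul_pow_add_mul_pow_eq (Real.exp_pos _).ne' (Real.exp_pos _).ne'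
    hx₁ hy₁ hxy fun k => Complex.ofReal_injective <|
      (hsignal p₁ p₂ p₃ _).symm.trans ((hk k).trans (hsignal q₁ q₂ q₃ _))
  exact ⟨by linarith, by linarith, by linarith⟩
end
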